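/- Let n ≥ 0, r ≥ 2 and 1 ≤ t ≤ r−1 be integers. Then the total number of different part sizes appearing at least t times in all partitions of n with no part repeated more than r−1 times equals the total number of consecutive differences that are at least t in all r-flat partitions of n: Σ_{λ∈D_r(n)} ℓ̄_t(λ) = Σ_{λ∈F_r(n)} d_t(λ). -/

import Mathlib

open scoped Classical

namespace BeckPaper

/-- The parts of a partition, sorted in non-increasing order. -/
def partsList {n : ℕ} (p : n.Partition) : List ℕ := p.parts.sort (· ≥ ·)

/-- The `i`-th part of a partition (`1`-indexed); `0` if `i` exceeds the number of parts. -/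
def part {n : ℕ} (p : n.Partition) (i : ℕ) : ℕ := (partsList p).getD (i - 1) 0

/-- `ℓ(λ)`: the number of parts of `λ`. -/
def numParts {n : ℕ} (p : n.Partition) : ℕ := Multiset.card p.parts

/-- `ℓ_t(λ)`: the number of parts of `λ` congruent to `t` modulo `r`. -/
def lMod (r t : ℕ) {n : ℕ} (p : n.Partition) : ℕ :=
  Multiset.card (p.parts.filter (fun x => x % r = t % r))

/-- `ℓ̄_t(λ)`: the number of different part sizes appearing at least `t` times in `λ`. -/
def lRep (t : ℕ) {n : ℕ} (p : n.Partition) : ℕ :=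
  (p.parts.toFinset.filter (fun s => t ≤ p.parts.count s)).card

/-- `ℓ̄(λ)`: the number of different part sizes of `λ`. -/
def lDist {n : ℕ} (p : n.Partition) : ℕ := p.parts.toFinset.card

/-- `d_t(λ)`: the number of indices `1 ≤ i ≤ ℓ(λ)` with `λ_i − λ_{i+1} ≥ t`. -/
def dCount (t : ℕ) {n : ℕ} (p : n.Partition) : ℕ :=
  ((Finset.Icc 1 (numParts p)).filter (fun i => t ≤ part p i - part p (i + 1))).card

/-- `λ ∈ O_r(n)`: no part is divisible by `r`. -/
def IsRegular (r : ℕ) {n : ℕ} (p : n.Partition) : Prop := ∀ x ∈ p.parts, ¬ r ∣ x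

/-- `λ ∈ D_r(n)`: no part appears more than `r − 1` times. -/
def IsRestricted (r : ℕ) {n : ℕ} (p : n.Partition) : Prop :=
  ∀ s : ℕ, p.parts.count s ≤ r - 1

/-- `λ ∈ F_r(n)`: all differences of consecutive parts (with `λ_{k+1} = 0`) are `≤ r − 1`. -/
def IsFlat (r : ℕ) {n : ℕ} (p : n.Partition) : Prop :=
  ∀ i, 1 ≤ i → i ≤ numParts p → part p i - part p (i + 1) ≤ r - 1

/-- `λ ∈ O_{1,r}(n)`: the set of part sizes divisible by `r` has exactly one element. -/
def IsOneRegular (r : ℕ) {n : ℕ} (p : n.Partition) : Prop :=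
  (p.parts.toFinset.filter (fun s => r ∣ s)).card = 1

/-- `λ ∈ D_{1,r}(n)`: exactly one part size appears at least `r` times. -/
def IsOneRestricted (r : ℕ) {n : ℕ} (p : n.Partition) : Prop :=
  (p.parts.toFinset.filter (fun s => r ≤ p.parts.count s)).card = 1

/-- `λ ∈ F_{1,r}(n)`: exactly one difference of consecutive parts is `≥ r`, and all
other such differences are `≤ r − 1`. -/
def IsOneFlat (r : ℕ) {n : ℕ} (p : n.Partition) : Prop :=
  ∃ i, (1 ≤ i ∧ i ≤ numParts p ∧ r ≤ part p i - part p (i + 1)) ∧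
    ∀ j, 1 ≤ j → j ≤ numParts p → j ≠ i → part p j - part p (j + 1) ≤ r - 1

/-- `λ ∈ T_r(n)`: exactly one part size has multiplicity at least `r`, and that
multiplicity is strictly less than `2r`. -/
def IsInT (r : ℕ) {n : ℕ} (p : n.Partition) : Prop :=
  ∃ s : ℕ, (r ≤ p.parts.count s ∧ p.parts.count s < 2 * r) ∧
    ∀ s' : ℕ, r ≤ p.parts.count s' → s' = s

/-! Conjugation `λ ↦ λ'`, with `λ'_j = #{i : λ_i ≥ j}`, is an involution on the partitions of `n`
under which the multiplicity of `s` in `λ` becomes the difference `λ'_s − λ'_{s+1}`. Hence it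
maps `D_r(n)` bijectively onto `F_r(n)` and carries `ℓ̄_t(λ)` to `d_t(λ')` when `t ≥ 1`. -/

end BeckPaper

theorem List.le_getD_iff_lt_length_filter {l : List ℕ} (hl : l.Pairwise (· ≥ ·)) {i j : ℕ}
    (hj : 1 ≤ j) : j ≤ l.getD i 0 ↔ i < (l.filter (j ≤ ·)).length := by
  induction l generalizing i with
  | nil => simp; omega
  | cons a l ih =>
    obtain ⟨ha, hl⟩ := List.pairwise_cons.mp hl
    by_cases hja : j ≤ a
    · cases i with
      | zero => simp [hja]
      | succ i =>
        simp only [List.getD_cons_succ, List.filter_cons, hja, decide_true, if_true,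
          List.length_cons, ih hl]
        omega
    · have hnil : l.filter (j ≤ ·) = [] :=
        List.filter_eq_nil_iff.mpr fun x hx => by
          simpa using fun h : j ≤ x => hja (h.trans (ha x hx))
      cases i with
      | zero => simp [hja, hnil]
      | succ i =>
        have hget : l.getD i 0 < j := by
          rw [List.getD_eq_getElem?_getD]
          cases h : l[i]? with
          | none => simp; omega
          | some x => simpa using lt_of_le_of_lt (ha x (List.mem_of_getElem? h)) (by omega)
        simp only [List.getD_cons_succ, List.filter_cons, hja, decide_false, hnil]
        exact iff_of_false (by omega) (by simp)

theorem Multiset.count_add_card_filter_lt (m : Multiset ℕ) (s : ℕ) :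
    m.count s + Multiset.card (m.filter (s < ·)) = Multiset.card (m.filter (s ≤ ·)) := by
  induction m using Multiset.induction with
  | empty => simp
  | cons a m ih =>
    simp only [Multiset.count_cons, Multiset.filter_cons, Multiset.card_add]
    split_ifs <;> simp <;> omega

theorem Multiset.sum_Icc_card_filter_le {m : Multiset ℕ} {M : ℕ} (hm : ∀ x ∈ m, x ≤ M) :
    ∑ i ∈ Finset.Icc 1 M, Multiset.card (m.filter (i ≤ ·)) = m.sum := by
  induction m using Multiset.induction with
  | empty => simp
  | cons a m ih =>
    have hIcc : (Finset.Icc 1 M).filter (· ≤ a) = Finset.Icc 1 a := by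
      ext i
      simp only [Finset.mem_filter, Finset.mem_Icc]
      have := hm a (Multiset.mem_cons_self a m)
      omega
    simp only [Multiset.filter_cons, Multiset.card_add, Finset.sum_add_distrib, Multiset.sum_cons]
    rw [ih fun x hx => hm x (Multiset.mem_cons_of_mem hx)]
    simp [apply_ite, Finset.sum_boole, hIcc]

namespace BeckPaper

def numPartsGe {n : ℕ} (p : n.Partition) (j : ℕ) : ℕ :=
  Multiset.card (p.parts.filter (j ≤ ·))

theorem le_part_iff {n : ℕ} (p : n.Partition) {i j : ℕ} (hi : 1 ≤ i) (hj : 1 ≤ j) :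
    j ≤ part p i ↔ i ≤ numPartsGe p j := by
  have hsorted : (partsList p).Pairwise (· ≥ ·) := Multiset.pairwise_sort _ _
  have hcoe : (partsList p : Multiset ℕ) = p.parts := Multiset.sort_eq _ _
  rw [part, numPartsGe, ← hcoe, Multiset.filter_coe,
    Multiset.coe_card, List.le_getD_iff_lt_length_filter hsorted hj]
  omega

theorem le_part_one {n : ℕ} (p : n.Partition) {x : ℕ} (hx : x ∈ p.parts) : x ≤ part p 1 :=
  (le_part_iff p le_rfl (p.parts_pos hx)).mpr <|
    Multiset.card_pos_iff_exists_mem.mpr ⟨x, Multiset.mem_filter.mpr ⟨hx, le_rfl⟩⟩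

theorem part_le_part_one {n : ℕ} (p : n.Partition) {j : ℕ} (hj : 1 ≤ j) :
    part p j ≤ part p 1 := by
  rcases Nat.eq_zero_or_pos (part p j) with h | h
  · omega
  · exact (le_part_iff p le_rfl h).mpr (le_trans hj ((le_part_iff p hj h).mp le_rfl))

theorem count_add_numPartsGe_succ {n : ℕ} (p : n.Partition) (s : ℕ) :
    p.parts.count s + numPartsGe p (s + 1) = numPartsGe p s :=
  Multiset.count_add_card_filter_lt p.parts s

theorem count_zero_parts {n : ℕ} (p : n.Partition) : p.parts.count 0 = 0 :=
  Multiset.count_eq_zero.mpr fun h => (p.parts_pos h).ne rfl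

theorem ext_of_numPartsGe {n : ℕ} {p q : n.Partition}
    (h : ∀ j, 1 ≤ j → numPartsGe p j = numPartsGe q j) : p = q := by
  refine Nat.Partition.ext (Multiset.ext.mpr fun s => ?_)
  rcases Nat.eq_zero_or_pos s with rfl | hs
  · rw [count_zero_parts, count_zero_parts]
  · have hp := count_add_numPartsGe_succ p s
    have hq := count_add_numPartsGe_succ q s
    rw [h s hs, h (s + 1) (by omega)] at hp
    omega

def conj {n : ℕ} (p : n.Partition) : n.Partition where
  parts := (Finset.Icc 1 (part p 1)).val.map (numPartsGe p)
  parts_pos := by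
    simp only [Multiset.mem_map, Finset.mem_val, Finset.mem_Icc]
    rintro _ ⟨j, hj, rfl⟩
    exact (le_part_iff p le_rfl hj.1).mp hj.2
  parts_sum :=
    (Multiset.sum_Icc_card_filter_le fun x hx => le_part_one p hx).trans p.parts_sum

theorem numPartsGe_conj {n : ℕ} (p : n.Partition) {j : ℕ} (hj : 1 ≤ j) :
    numPartsGe (conj p) j = part p j := by
  have hfilter : (Finset.Icc 1 (part p 1)).filter (fun i => j ≤ numPartsGe p i) =
      Finset.Icc 1 (part p j) := by
    ext i
    simp only [Finset.mem_filter, Finset.mem_Icc]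
    have := part_le_part_one p hj
    constructor
    · rintro ⟨hi, hle⟩
      exact ⟨hi.1, (le_part_iff p hj hi.1).mpr hle⟩
    · rintro ⟨hi, hle⟩
      exact ⟨⟨hi, hle.trans this⟩, (le_part_iff p hj hi).mp hle⟩
  rw [numPartsGe, conj, Multiset.filter_map, Multiset.card_map]
  change ((Finset.Icc 1 (part p 1)).filter fun i => j ≤ numPartsGe p i).card = _
  rw [hfilter, Nat.card_Icc, Nat.add_sub_cancel]

theorem part_conj {n : ℕ} (p : n.Partition) {i : ℕ} (hi : 1 ≤ i) :
    part (conj p) i = numPartsGe p i := by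
  have key : ∀ k, 1 ≤ k → (k ≤ part (conj p) i ↔ k ≤ numPartsGe p i) := fun k hk => by
    rw [le_part_iff (conj p) hi hk, numPartsGe_conj p hk, le_part_iff p hk hi]
  refine le_antisymm ?_ ?_
  · rcases Nat.eq_zero_or_pos (part (conj p) i) with h | h
    · omega
    · exact (key _ h).mp le_rfl
  · rcases Nat.eq_zero_or_pos (numPartsGe p i) with h | h
    · omega
    · exact (key _ h).mpr le_rfl

theorem conj_conj {n : ℕ} (p : n.Partition) : conj (conj p) = p :=
  ext_of_numPartsGe fun j hj => by rw [numPartsGe_conj (conj p) hj, part_conj p hj]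

theorem numParts_conj {n : ℕ} (p : n.Partition) : numParts (conj p) = part p 1 := by
  simp [numParts, conj]

theorem count_eq_part_conj_sub {n : ℕ} (p : n.Partition) {s : ℕ} (hs : 1 ≤ s) :
    p.parts.count s = part (conj p) s - part (conj p) (s + 1) := by
  rw [part_conj p hs, part_conj p (by omega), ← count_add_numPartsGe_succ p s]
  omega

theorem lRep_eq_dCount_conj {n : ℕ} (p : n.Partition) {t : ℕ} (ht : 1 ≤ t) :
    lRep t p = dCount t (conj p) := by
  rw [lRep, dCount, numParts_conj]
  congr 1
  ext s
  simp only [Finset.mem_filter, Finset.mem_Icc, Multiset.mem_toFinset]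
  constructor
  · rintro ⟨hs, hts⟩
    have h1 := p.parts_pos hs
    exact ⟨⟨h1, le_part_one p hs⟩, count_eq_part_conj_sub p h1 ▸ hts⟩
  · rintro ⟨⟨h1, -⟩, hts⟩
    rw [← count_eq_part_conj_sub p h1] at hts
    exact ⟨Multiset.count_pos.mp (by omega), hts⟩

theorem isRestricted_iff_isFlat_conj {n : ℕ} (p : n.Partition) (r : ℕ) :
    IsRestricted r p ↔ IsFlat r (conj p) := by
  rw [IsRestricted, IsFlat, numParts_conj]
  constructor
  · intro h s hs _
    exact count_eq_part_conj_sub p hs ▸ h s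
  · intro h s
    rcases Nat.eq_zero_or_pos s with rfl | hs
    · simp [count_zero_parts]
    by_cases hsM : s ≤ part p 1
    · exact count_eq_part_conj_sub p hs ▸ h s hs hsM
    · rw [Multiset.count_eq_zero_of_notMem fun hmem => hsM (le_part_one p hmem)]
      omega

theorem rep_restricted_eq_diff_flat_general (n r t : ℕ) (ht1 : 1 ≤ t) :
    (∑ p ∈ Finset.univ.filter (fun p : n.Partition => IsRestricted r p), lRep t p) =
      ∑ p ∈ Finset.univ.filter (fun p : n.Partition => IsFlat r p), dCount t p := by
  refine Finset.sum_nbij' conj conj ?_ ?_ (fun p _ => conj_conj p) (fun p _ => conj_conj p)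
    (fun p _ => lRep_eq_dCount_conj p ht1)
  · simp [isRestricted_iff_isFlat_conj]
  · simp [isRestricted_iff_isFlat_conj, conj_conj]

theorem rep_restricted_eq_diff_flat (n r t : ℕ) (hr : 2 ≤ r) (ht1 : 1 ≤ t) (ht2 : t ≤ r - 1) :
    (∑ p ∈ Finset.univ.filter (fun p : n.Partition => IsRestricted r p), lRep t p) =
      ∑ p ∈ Finset.univ.filter (fun p : n.Partition => IsFlat r p), dCount t p :=
  rep_restricted_eq_diff_flat_general n r t ht1

end BeckPaper
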